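/- arXiv:0808.2004 — 2 statements merged into one kernel-verified Lean document; each statement's English description precedes it below -/
import Mathlib

section
/- (Bianchi Permutability Theorem for the hyperbolic sinh-Gordon equation.) Let σ₁, σ₂ ∈ ℝ be nonzero with σ₁ ≠ σ₂, and let θ₀, θ₁, θ₂, θ₃ : ℝ² → ℝ be smooth functions such that (θ₀, θ₁) is related by the Bäcklund transformation with parameter σ₁, (θ₀, θ₂) is related by the Bäcklund transformation with parameter σ₂, and at every point tanh((θ₃−θ₀)/2) = ((σ₂+σ₁)/(σ₂−σ₁))·tanh((θ₂−θ₁)/2). Then (θ₁, θ₃) is related by the Bäcklund transformation with parameter σ₂ and (θ₂, θ₃) is related by the Bäcklund transformation with parameter σ₁. -/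
/-- Partial derivative with respect to the first variable `u`. -/
noncomputable def pdu (f : ℝ × ℝ → ℝ) (p : ℝ × ℝ) : ℝ :=
  deriv (fun u => f (u, p.2)) p.1

/-- Partial derivative with respect to the second variable `v`. -/
noncomputable def pdv (f : ℝ × ℝ → ℝ) (p : ℝ × ℝ) : ℝ :=
  deriv (fun v => f (p.1, v)) p.2

/-- The pair `(θ₀, θ₁)` is related by the Bäcklund transformation for the
hyperbolic sinh-Gordon equation with parameter `σ`. -/
def BacklundSGh (σ : ℝ) (θ₀ θ₁ : ℝ × ℝ → ℝ) : Prop :=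
  ∀ p : ℝ × ℝ,
    pdv θ₁ p - pdu θ₀ p =
      (σ * Real.sinh (θ₁ p + θ₀ p) + σ⁻¹ * Real.sinh (θ₁ p - θ₀ p)) / 2 ∧
    pdu θ₁ p - pdv θ₀ p =
      (σ * Real.sinh (θ₁ p + θ₀ p) - σ⁻¹ * Real.sinh (θ₁ p - θ₀ p)) / 2

private lemma exp_half_sq (x : ℝ) : Real.exp (x/2) ^ 2 = Real.exp x := by
  rw [sq, ← Real.exp_add, add_halves]

private lemma sinh_add_half (x y : ℝ) :
    Real.sinh (x + y) =
      ((Real.exp (x/2) * Real.exp (y/2))^4 - 1) / (2*(Real.exp (x/2) * Real.exp (y/2))^2) := by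
  have hx := (Real.exp_pos (x/2)).ne'
  have hy := (Real.exp_pos (y/2)).ne'
  rw [Real.sinh_eq, Real.exp_neg, Real.exp_add, ← exp_half_sq x, ← exp_half_sq y]
  field_simp

private lemma sinh_sub_half (x y : ℝ) :
    Real.sinh (x - y) =
      ((Real.exp (x/2))^4 - (Real.exp (y/2))^4) / (2*(Real.exp (x/2))^2*(Real.exp (y/2))^2) := by
  have hx := (Real.exp_pos (x/2)).ne'
  have hy := (Real.exp_pos (y/2)).ne'
  rw [Real.sinh_eq, Real.exp_neg, Real.exp_sub, ← exp_half_sq x, ← exp_half_sq y]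
  field_simp

private lemma sinh_half_sub (x y : ℝ) :
    Real.sinh ((x - y)/2) =
      ((Real.exp (x/2))^2 - (Real.exp (y/2))^2) / (2*(Real.exp (x/2) * Real.exp (y/2))) := by
  have hx := (Real.exp_pos (x/2)).ne'
  have hy := (Real.exp_pos (y/2)).ne'
  rw [Real.sinh_eq, Real.exp_neg, show (x-y)/2 = x/2 - y/2 by ring, Real.exp_sub]
  field_simp

private lemma cosh_half_sub (x y : ℝ) :
    Real.cosh ((x - y)/2) =
      ((Real.exp (x/2))^2 + (Real.exp (y/2))^2) / (2*(Real.exp (x/2) * Real.exp (y/2))) := by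
  have hx := (Real.exp_pos (x/2)).ne'
  have hy := (Real.exp_pos (y/2)).ne'
  rw [Real.cosh_eq, Real.exp_neg, show (x-y)/2 = x/2 - y/2 by ring, Real.exp_sub]
  field_simp

private lemma backlund_polyA (s x0 y1 t0 t1 : ℝ) (hs : s ≠ 0)
    (h : y1 - x0 = (s * Real.sinh (t1 + t0) + s⁻¹ * Real.sinh (t1 - t0))/2) :
    4*s*(Real.exp (t0/2))^2*(Real.exp (t1/2))^2*(y1-x0)
      = s^2*((Real.exp (t0/2)*Real.exp (t1/2))^4-1)
        + ((Real.exp (t1/2))^4-(Real.exp (t0/2))^4) := by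
  have h0 := (Real.exp_pos (t0/2)).ne'
  have h1 := (Real.exp_pos (t1/2)).ne'
  rw [sinh_add_half, sinh_sub_half] at h
  field_simp at h
  refine mul_left_cancel₀ (show (2*(Real.exp (t1/2)*Real.exp (t0/2))^2 : ℝ) ≠ 0 by positivity) ?_
  linear_combination (2*(Real.exp (t1/2)*Real.exp (t0/2))^2) * h

private lemma backlund_polyB (s x0 y1 t0 t1 : ℝ) (hs : s ≠ 0)
    (h : y1 - x0 = (s * Real.sinh (t1 + t0) - s⁻¹ * Real.sinh (t1 - t0))/2) :
    4*s*(Real.exp (t0/2))^2*(Real.exp (t1/2))^2*(y1-x0)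
      = s^2*((Real.exp (t0/2)*Real.exp (t1/2))^4-1)
        - ((Real.exp (t1/2))^4-(Real.exp (t0/2))^4) := by
  have h0 := (Real.exp_pos (t0/2)).ne'
  have h1 := (Real.exp_pos (t1/2)).ne'
  rw [sinh_add_half, sinh_sub_half] at h
  field_simp at h
  refine mul_left_cancel₀ (show (2*(Real.exp (t1/2)*Real.exp (t0/2))^2 : ℝ) ≠ 0 by positivity) ?_
  linear_combination (2*(Real.exp (t1/2)*Real.exp (t0/2))^2) * h

private lemma poly_backlundA (s x1 y3 t1 t3 : ℝ) (hs : s ≠ 0)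
    (h : 4*s*(Real.exp (t1/2))^2*(Real.exp (t3/2))^2*(y3-x1)
      = s^2*((Real.exp (t1/2)*Real.exp (t3/2))^4-1)
        + ((Real.exp (t3/2))^4-(Real.exp (t1/2))^4)) :
    y3 - x1 = (s * Real.sinh (t3 + t1) + s⁻¹ * Real.sinh (t3 - t1))/2 := by
  have h1 := (Real.exp_pos (t1/2)).ne'
  have h3 := (Real.exp_pos (t3/2)).ne'
  rw [sinh_add_half, sinh_sub_half]
  field_simp
  linear_combination h

private lemma poly_backlundB (s x1 y3 t1 t3 : ℝ) (hs : s ≠ 0)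
    (h : 4*s*(Real.exp (t1/2))^2*(Real.exp (t3/2))^2*(y3-x1)
      = s^2*((Real.exp (t1/2)*Real.exp (t3/2))^4-1)
        - ((Real.exp (t3/2))^4-(Real.exp (t1/2))^4)) :
    y3 - x1 = (s * Real.sinh (t3 + t1) - s⁻¹ * Real.sinh (t3 - t1))/2 := by
  have h1 := (Real.exp_pos (t1/2)).ne'
  have h3 := (Real.exp_pos (t3/2)).ne'
  rw [sinh_add_half, sinh_sub_half]
  field_simp
  linear_combination h


private lemma bianchi_core
    (s1 s2 a b e d X0 X1 X2 X3 Y0 Y1 Y2 Y3 : ℝ)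
    (hs1 : s1 ≠ 0) (hs2 : s2 ≠ 0) (hΔ : s2 - s1 ≠ 0) (ha : 0 < a) (hb : 0 < b) (he : 0 < e) (hd : 0 < d)
    (hA1 : 4*s1*a^2*b^2*(Y1-X0) = s1^2*((a*b)^4-1) + (b^4-a^4))
    (hB1 : 4*s1*a^2*b^2*(X1-Y0) = s1^2*((a*b)^4-1) - (b^4-a^4))
    (hA2 : 4*s2*a^2*e^2*(Y2-X0) = s2^2*((a*e)^4-1) + (e^4-a^4))
    (hB2 : 4*s2*a^2*e^2*(X2-Y0) = s2^2*((a*e)^4-1) - (e^4-a^4))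
    (hP : (s2-s1)*(d^2-a^2)*(e^2+b^2) = (s2+s1)*(e^2-b^2)*(d^2+a^2))
    (hU : ((s2-s1)*(d^2+a^2)*(e^2+b^2) - (s2+s1)*(d^2-a^2)*(e^2-b^2))*(X3-X0)
        = ((s2+s1)*(d^2+a^2)*(e^2+b^2) - (s2-s1)*(d^2-a^2)*(e^2-b^2))*(X2-X1))
    (hV : ((s2-s1)*(d^2+a^2)*(e^2+b^2) - (s2+s1)*(d^2-a^2)*(e^2-b^2))*(Y3-Y0)
        = ((s2+s1)*(d^2+a^2)*(e^2+b^2) - (s2-s1)*(d^2-a^2)*(e^2-b^2))*(Y2-Y1)) :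
    (4*s2*b^2*d^2*(Y3-X1) = s2^2*((b*d)^4-1) + (d^4-b^4)) ∧
    (4*s2*b^2*d^2*(X3-Y1) = s2^2*((b*d)^4-1) - (d^4-b^4)) ∧
    (4*s1*e^2*d^2*(Y3-X2) = s1^2*((e*d)^4-1) + (d^4-e^4)) ∧
    (4*s1*e^2*d^2*(X3-Y2) = s1^2*((e*d)^4-1) - (d^4-e^4)) := by
  have hMkey : ((s2-s1)*(d^2+a^2)*(e^2+b^2) - (s2+s1)*(d^2-a^2)*(e^2-b^2))*(d^2+a^2)
      = (s2-s1)*(e^2+b^2)*(4*d^2*a^2) := by linear_combination (d^2-a^2)*hP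
  have hM : ((s2-s1)*(d^2+a^2)*(e^2+b^2) - (s2+s1)*(d^2-a^2)*(e^2-b^2)) ≠ 0 := by
    intro h
    have h2 : (s2-s1)*(e^2+b^2)*(4*d^2*a^2) ≠ 0 :=
      mul_ne_zero (mul_ne_zero hΔ (by positivity)) (by positivity)
    exact h2 (by rw [← hMkey, h, zero_mul])
  have hk1 : (4*s1*s2*a^2*b^2*e^2) * ((s2-s1)*(d^2+a^2)*(e^2+b^2) - (s2+s1)*(d^2-a^2)*(e^2-b^2)) ≠ 0 :=
    mul_ne_zero (by positivity) hM
  refine ⟨mul_left_cancel₀ hk1 ?_, mul_left_cancel₀ hk1 ?_, mul_left_cancel₀ hk1 ?_, mul_left_cancel₀ hk1 ?_⟩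
  · linear_combination (16*s1*s2^2*a^2*b^4*d^2*e^2) * hV + (-(4*s2^2*b^2*d^2*e^2) * ((s2+s1)*(d^2+a^2)*(e^2+b^2) - (s2-s1)*(d^2-a^2)*(e^2-b^2))) * hA1 + ((4*s1*s2*b^4*d^2) * ((s2+s1)*(d^2+a^2)*(e^2+b^2) - (s2-s1)*(d^2-a^2)*(e^2-b^2))) * hA2 + (-(4*s2^2*b^2*d^2*e^2) * ((s2-s1)*(d^2+a^2)*(e^2+b^2) - (s2+s1)*(d^2-a^2)*(e^2-b^2))) * hB1 + (-4*s1*s2^3*a^4*b^4*e^4*d^2 - 4*s1*s2^3*a^2*b^6*e^2*d^4 - 4*s1*s2^3*a^2*b^2*e^2 - 4*s1*s2^3*b^4*d^2 - 4*s1*s2*a^4*b^4*d^2 - 4*s1*s2*a^2*b^6*e^2 - 4*s1*s2*a^2*b^2*e^2*d^4 - 4*s1*s2*b^4*e^4*d^2) * hP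
  · linear_combination (16*s1*s2^2*a^2*b^4*d^2*e^2) * hU + (-(4*s2^2*b^2*d^2*e^2) * ((s2-s1)*(d^2+a^2)*(e^2+b^2) - (s2+s1)*(d^2-a^2)*(e^2-b^2))) * hA1 + (-(4*s2^2*b^2*d^2*e^2) * ((s2+s1)*(d^2+a^2)*(e^2+b^2) - (s2-s1)*(d^2-a^2)*(e^2-b^2))) * hB1 + ((4*s1*s2*b^4*d^2) * ((s2+s1)*(d^2+a^2)*(e^2+b^2) - (s2-s1)*(d^2-a^2)*(e^2-b^2))) * hB2 + (-4*s1*s2^3*a^4*b^4*e^4*d^2 - 4*s1*s2^3*a^2*b^6*e^2*d^4 - 4*s1*s2^3*a^2*b^2*e^2 - 4*s1*s2^3*b^4*d^2 + 4*s1*s2*a^4*b^4*d^2 + 4*s1*s2*a^2*b^6*e^2 + 4*s1*s2*a^2*b^2*e^2*d^4 + 4*s1*s2*b^4*e^4*d^2) * hP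
  · linear_combination (16*s1^2*s2*a^2*b^2*d^2*e^4) * hV + (-(4*s1*s2*e^4*d^2) * ((s2+s1)*(d^2+a^2)*(e^2+b^2) - (s2-s1)*(d^2-a^2)*(e^2-b^2))) * hA1 + ((4*s1^2*b^2*e^2*d^2) * ((s2+s1)*(d^2+a^2)*(e^2+b^2) - (s2-s1)*(d^2-a^2)*(e^2-b^2))) * hA2 + (-(4*s1^2*b^2*e^2*d^2) * ((s2-s1)*(d^2+a^2)*(e^2+b^2) - (s2+s1)*(d^2-a^2)*(e^2-b^2))) * hB2 + (-4*s1^3*s2*a^4*b^4*e^4*d^2 - 4*s1^3*s2*a^2*b^2*e^6*d^4 - 4*s1^3*s2*a^2*b^2*e^2 - 4*s1^3*s2*e^4*d^2 - 4*s1*s2*a^4*e^4*d^2 - 4*s1*s2*a^2*b^2*e^6 - 4*s1*s2*a^2*b^2*e^2*d^4 - 4*s1*s2*b^4*e^4*d^2) * hP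
  · linear_combination (16*s1^2*s2*a^2*b^2*d^2*e^4) * hU + (-(4*s1^2*b^2*e^2*d^2) * ((s2-s1)*(d^2+a^2)*(e^2+b^2) - (s2+s1)*(d^2-a^2)*(e^2-b^2))) * hA2 + (-(4*s1*s2*e^4*d^2) * ((s2+s1)*(d^2+a^2)*(e^2+b^2) - (s2-s1)*(d^2-a^2)*(e^2-b^2))) * hB1 + ((4*s1^2*b^2*e^2*d^2) * ((s2+s1)*(d^2+a^2)*(e^2+b^2) - (s2-s1)*(d^2-a^2)*(e^2-b^2))) * hB2 + (-4*s1^3*s2*a^4*b^4*e^4*d^2 - 4*s1^3*s2*a^2*b^2*e^6*d^4 - 4*s1^3*s2*a^2*b^2*e^2 - 4*s1^3*s2*e^4*d^2 + 4*s1*s2*a^4*e^4*d^2 + 4*s1*s2*a^2*b^2*e^6 + 4*s1*s2*a^2*b^2*e^2*d^4 + 4*s1*s2*b^4*e^4*d^2) * hP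

private lemma hasDerivAt_pdu (f : ℝ × ℝ → ℝ) (hf : ContDiff ℝ (⊤ : ℕ∞) f) (p : ℝ × ℝ) :
    HasDerivAt (fun u => f (u, p.2)) (pdu f p) p.1 :=
  (((hf.differentiable (by simp)) (p.1, p.2)).comp p.1
    (differentiableAt_id.prodMk (differentiableAt_const _))).hasDerivAt

private lemma hasDerivAt_pdv (f : ℝ × ℝ → ℝ) (hf : ContDiff ℝ (⊤ : ℕ∞) f) (p : ℝ × ℝ) :
    HasDerivAt (fun v => f (p.1, v)) (pdv f p) p.2 :=
  (((hf.differentiable (by simp)) (p.1, p.2)).comp p.2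
    ((differentiableAt_const _).prodMk differentiableAt_id)).hasDerivAt

/-- Bianchi Permutability Theorem for the hyperbolic sinh-Gordon equation: if
`θ₁ = B_{σ₁}(θ₀)`, `θ₂ = B_{σ₂}(θ₀)` and `θ₃` satisfies
`tanh((θ₃−θ₀)/2) = ((σ₂+σ₁)/(σ₂−σ₁))·tanh((θ₂−θ₁)/2)`,
then `θ₃ = B_{σ₂}(θ₁) = B_{σ₁}(θ₂)`. -/
theorem bianchi_permutability_hyperbolic_sinhGordon
    (σ₁ σ₂ : ℝ) (hσ₁ : σ₁ ≠ 0) (hσ₂ : σ₂ ≠ 0) (hσ : σ₁ ≠ σ₂)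
    (θ₀ θ₁ θ₂ θ₃ : ℝ × ℝ → ℝ)
    (h₀ : ContDiff ℝ (⊤ : ℕ∞) θ₀) (h₁ : ContDiff ℝ (⊤ : ℕ∞) θ₁)
    (h₂ : ContDiff ℝ (⊤ : ℕ∞) θ₂) (h₃ : ContDiff ℝ (⊤ : ℕ∞) θ₃)
    (hB₁ : BacklundSGh σ₁ θ₀ θ₁) (hB₂ : BacklundSGh σ₂ θ₀ θ₂)
    (hbpt : ∀ p : ℝ × ℝ,
      Real.tanh ((θ₃ p - θ₀ p) / 2) =
        (σ₂ + σ₁) / (σ₂ - σ₁) * Real.tanh ((θ₂ p - θ₁ p) / 2)) :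
    BacklundSGh σ₂ θ₁ θ₃ ∧ BacklundSGh σ₁ θ₂ θ₃ := by
  have hΔ : σ₂ - σ₁ ≠ 0 := sub_ne_zero.mpr (Ne.symm hσ)
  have hC : ∀ q : ℝ × ℝ,
      (σ₂ - σ₁) * (Real.sinh ((θ₃ q - θ₀ q)/2) * Real.cosh ((θ₂ q - θ₁ q)/2))
        = (σ₂ + σ₁) * (Real.sinh ((θ₂ q - θ₁ q)/2) * Real.cosh ((θ₃ q - θ₀ q)/2)) := by
    intro q
    have h := hbpt q
    rw [Real.tanh_eq_sinh_div_cosh, Real.tanh_eq_sinh_div_cosh] at h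
    have hc3 : Real.cosh ((θ₃ q - θ₀ q)/2) ≠ 0 := (Real.cosh_pos _).ne'
    have hc2 : Real.cosh ((θ₂ q - θ₁ q)/2) ≠ 0 := (Real.cosh_pos _).ne'
    field_simp at h
    linear_combination h
  have main : ∀ p : ℝ × ℝ,
      (4*σ₂*(Real.exp (θ₁ p/2))^2*(Real.exp (θ₃ p/2))^2*(pdv θ₃ p - pdu θ₁ p)
        = σ₂^2*((Real.exp (θ₁ p/2)*Real.exp (θ₃ p/2))^4-1)
          + ((Real.exp (θ₃ p/2))^4-(Real.exp (θ₁ p/2))^4)) ∧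
      (4*σ₂*(Real.exp (θ₁ p/2))^2*(Real.exp (θ₃ p/2))^2*(pdu θ₃ p - pdv θ₁ p)
        = σ₂^2*((Real.exp (θ₁ p/2)*Real.exp (θ₃ p/2))^4-1)
          - ((Real.exp (θ₃ p/2))^4-(Real.exp (θ₁ p/2))^4)) ∧
      (4*σ₁*(Real.exp (θ₂ p/2))^2*(Real.exp (θ₃ p/2))^2*(pdv θ₃ p - pdu θ₂ p)
        = σ₁^2*((Real.exp (θ₂ p/2)*Real.exp (θ₃ p/2))^4-1)
          + ((Real.exp (θ₃ p/2))^4-(Real.exp (θ₂ p/2))^4)) ∧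
      (4*σ₁*(Real.exp (θ₂ p/2))^2*(Real.exp (θ₃ p/2))^2*(pdu θ₃ p - pdv θ₂ p)
        = σ₁^2*((Real.exp (θ₂ p/2)*Real.exp (θ₃ p/2))^4-1)
          - ((Real.exp (θ₃ p/2))^4-(Real.exp (θ₂ p/2))^4)) := by
    intro p
    have ha := Real.exp_pos (θ₀ p/2)
    have hb := Real.exp_pos (θ₁ p/2)
    have he := Real.exp_pos (θ₂ p/2)
    have hd := Real.exp_pos (θ₃ p/2)
    -- Bäcklund relations in polynomial form
    have hA1 := backlund_polyA σ₁ (pdu θ₀ p) (pdv θ₁ p) (θ₀ p) (θ₁ p) hσ₁ (hB₁ p).1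
    have hB1 := backlund_polyB σ₁ (pdv θ₀ p) (pdu θ₁ p) (θ₀ p) (θ₁ p) hσ₁ (hB₁ p).2
    have hA2 := backlund_polyA σ₂ (pdu θ₀ p) (pdv θ₂ p) (θ₀ p) (θ₂ p) hσ₂ (hB₂ p).1
    have hB2 := backlund_polyB σ₂ (pdv θ₀ p) (pdu θ₂ p) (θ₀ p) (θ₂ p) hσ₂ (hB₂ p).2
    -- permutability constraint in polynomial form
    have hPp : (σ₂-σ₁)*((Real.exp (θ₃ p/2))^2-(Real.exp (θ₀ p/2))^2)
          *((Real.exp (θ₂ p/2))^2+(Real.exp (θ₁ p/2))^2)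
        = (σ₂+σ₁)*((Real.exp (θ₂ p/2))^2-(Real.exp (θ₁ p/2))^2)
          *((Real.exp (θ₃ p/2))^2+(Real.exp (θ₀ p/2))^2) := by
      have h := hC p
      rw [sinh_half_sub, cosh_half_sub, sinh_half_sub, cosh_half_sub] at h
      field_simp at h
      refine mul_left_cancel₀ (show (2*(Real.exp (θ₂ p/2)*Real.exp (θ₁ p/2))
        *(2*(Real.exp (θ₃ p/2)*Real.exp (θ₀ p/2))) : ℝ) ≠ 0 by positivity) ?_
      linear_combination (2*(Real.exp (θ₂ p/2)*Real.exp (θ₁ p/2))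
        *(2*(Real.exp (θ₃ p/2)*Real.exp (θ₀ p/2)))) * h
    -- derivative of the permutability constraint, u-direction
    have hd0u := hasDerivAt_pdu θ₀ h₀ p
    have hd1u := hasDerivAt_pdu θ₁ h₁ p
    have hd2u := hasDerivAt_pdu θ₂ h₂ p
    have hd3u := hasDerivAt_pdu θ₃ h₃ p
    have hwu : HasDerivAt (fun u => (θ₃ (u, p.2) - θ₀ (u, p.2))/2)
        ((pdu θ₃ p - pdu θ₀ p)/2) p.1 := (hd3u.sub hd0u).div_const 2
    have hzu : HasDerivAt (fun u => (θ₂ (u, p.2) - θ₁ (u, p.2))/2)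
        ((pdu θ₂ p - pdu θ₁ p)/2) p.1 := (hd2u.sub hd1u).div_const 2
    have hLu : HasDerivAt
        (fun u => (σ₂ - σ₁) * (Real.sinh ((θ₃ (u, p.2) - θ₀ (u, p.2))/2)
          * Real.cosh ((θ₂ (u, p.2) - θ₁ (u, p.2))/2)))
        ((σ₂ - σ₁) * ((Real.cosh ((θ₃ p - θ₀ p)/2) * ((pdu θ₃ p - pdu θ₀ p)/2))
            * Real.cosh ((θ₂ p - θ₁ p)/2)
          + Real.sinh ((θ₃ p - θ₀ p)/2)
            * (Real.sinh ((θ₂ p - θ₁ p)/2) * ((pdu θ₂ p - pdu θ₁ p)/2)))) p.1 :=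
      (hwu.sinh.mul hzu.cosh).const_mul _
    have hRu : HasDerivAt
        (fun u => (σ₂ + σ₁) * (Real.sinh ((θ₂ (u, p.2) - θ₁ (u, p.2))/2)
          * Real.cosh ((θ₃ (u, p.2) - θ₀ (u, p.2))/2)))
        ((σ₂ + σ₁) * ((Real.cosh ((θ₂ p - θ₁ p)/2) * ((pdu θ₂ p - pdu θ₁ p)/2))
            * Real.cosh ((θ₃ p - θ₀ p)/2)
          + Real.sinh ((θ₂ p - θ₁ p)/2)
            * (Real.sinh ((θ₃ p - θ₀ p)/2) * ((pdu θ₃ p - pdu θ₀ p)/2)))) p.1 :=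
      (hzu.sinh.mul hwu.cosh).const_mul _
    have heq : (fun u => (σ₂ - σ₁) * (Real.sinh ((θ₃ (u, p.2) - θ₀ (u, p.2))/2)
          * Real.cosh ((θ₂ (u, p.2) - θ₁ (u, p.2))/2)))
        = (fun u => (σ₂ + σ₁) * (Real.sinh ((θ₂ (u, p.2) - θ₁ (u, p.2))/2)
          * Real.cosh ((θ₃ (u, p.2) - θ₀ (u, p.2))/2))) :=
      funext fun u => hC (u, p.2)
    have hderu : (σ₂ - σ₁) * ((Real.cosh ((θ₃ p - θ₀ p)/2) * ((pdu θ₃ p - pdu θ₀ p)/2))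
            * Real.cosh ((θ₂ p - θ₁ p)/2)
          + Real.sinh ((θ₃ p - θ₀ p)/2)
            * (Real.sinh ((θ₂ p - θ₁ p)/2) * ((pdu θ₂ p - pdu θ₁ p)/2)))
        = (σ₂ + σ₁) * ((Real.cosh ((θ₂ p - θ₁ p)/2) * ((pdu θ₂ p - pdu θ₁ p)/2))
            * Real.cosh ((θ₃ p - θ₀ p)/2)
          + Real.sinh ((θ₂ p - θ₁ p)/2)
            * (Real.sinh ((θ₃ p - θ₀ p)/2) * ((pdu θ₃ p - pdu θ₀ p)/2))) := by
      have h1 := hLu.deriv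
      have h2 := hRu.deriv
      rw [heq] at h1
      rw [h2] at h1
      exact h1.symm
    have hUp : ((σ₂-σ₁)*((Real.exp (θ₃ p/2))^2+(Real.exp (θ₀ p/2))^2)
            *((Real.exp (θ₂ p/2))^2+(Real.exp (θ₁ p/2))^2)
          - (σ₂+σ₁)*((Real.exp (θ₃ p/2))^2-(Real.exp (θ₀ p/2))^2)
            *((Real.exp (θ₂ p/2))^2-(Real.exp (θ₁ p/2))^2))*(pdu θ₃ p - pdu θ₀ p)
        = ((σ₂+σ₁)*((Real.exp (θ₃ p/2))^2+(Real.exp (θ₀ p/2))^2)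
            *((Real.exp (θ₂ p/2))^2+(Real.exp (θ₁ p/2))^2)
          - (σ₂-σ₁)*((Real.exp (θ₃ p/2))^2-(Real.exp (θ₀ p/2))^2)
            *((Real.exp (θ₂ p/2))^2-(Real.exp (θ₁ p/2))^2))*(pdu θ₂ p - pdu θ₁ p) := by
      rw [sinh_half_sub, cosh_half_sub, sinh_half_sub, cosh_half_sub] at hderu
      field_simp at hderu
      refine mul_left_cancel₀ (show (512*(Real.exp (θ₂ p/2)*Real.exp (θ₁ p/2)
        *Real.exp (θ₃ p/2)*Real.exp (θ₀ p/2))^3 : ℝ) ≠ 0 by positivity) ?_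
      linear_combination (512*(Real.exp (θ₂ p/2)*Real.exp (θ₁ p/2)
        *Real.exp (θ₃ p/2)*Real.exp (θ₀ p/2))^3) * hderu
    -- derivative of the permutability constraint, v-direction
    have hd0v := hasDerivAt_pdv θ₀ h₀ p
    have hd1v := hasDerivAt_pdv θ₁ h₁ p
    have hd2v := hasDerivAt_pdv θ₂ h₂ p
    have hd3v := hasDerivAt_pdv θ₃ h₃ p
    have hwv : HasDerivAt (fun v => (θ₃ (p.1, v) - θ₀ (p.1, v))/2)
        ((pdv θ₃ p - pdv θ₀ p)/2) p.2 := (hd3v.sub hd0v).div_const 2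
    have hzv : HasDerivAt (fun v => (θ₂ (p.1, v) - θ₁ (p.1, v))/2)
        ((pdv θ₂ p - pdv θ₁ p)/2) p.2 := (hd2v.sub hd1v).div_const 2
    have hLv : HasDerivAt
        (fun v => (σ₂ - σ₁) * (Real.sinh ((θ₃ (p.1, v) - θ₀ (p.1, v))/2)
          * Real.cosh ((θ₂ (p.1, v) - θ₁ (p.1, v))/2)))
        ((σ₂ - σ₁) * ((Real.cosh ((θ₃ p - θ₀ p)/2) * ((pdv θ₃ p - pdv θ₀ p)/2))
            * Real.cosh ((θ₂ p - θ₁ p)/2)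
          + Real.sinh ((θ₃ p - θ₀ p)/2)
            * (Real.sinh ((θ₂ p - θ₁ p)/2) * ((pdv θ₂ p - pdv θ₁ p)/2)))) p.2 :=
      (hwv.sinh.mul hzv.cosh).const_mul _
    have hRv : HasDerivAt
        (fun v => (σ₂ + σ₁) * (Real.sinh ((θ₂ (p.1, v) - θ₁ (p.1, v))/2)
          * Real.cosh ((θ₃ (p.1, v) - θ₀ (p.1, v))/2)))
        ((σ₂ + σ₁) * ((Real.cosh ((θ₂ p - θ₁ p)/2) * ((pdv θ₂ p - pdv θ₁ p)/2))
            * Real.cosh ((θ₃ p - θ₀ p)/2)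
          + Real.sinh ((θ₂ p - θ₁ p)/2)
            * (Real.sinh ((θ₃ p - θ₀ p)/2) * ((pdv θ₃ p - pdv θ₀ p)/2)))) p.2 :=
      (hzv.sinh.mul hwv.cosh).const_mul _
    have heqv : (fun v => (σ₂ - σ₁) * (Real.sinh ((θ₃ (p.1, v) - θ₀ (p.1, v))/2)
          * Real.cosh ((θ₂ (p.1, v) - θ₁ (p.1, v))/2)))
        = (fun v => (σ₂ + σ₁) * (Real.sinh ((θ₂ (p.1, v) - θ₁ (p.1, v))/2)
          * Real.cosh ((θ₃ (p.1, v) - θ₀ (p.1, v))/2))) :=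
      funext fun v => hC (p.1, v)
    have hderv : (σ₂ - σ₁) * ((Real.cosh ((θ₃ p - θ₀ p)/2) * ((pdv θ₃ p - pdv θ₀ p)/2))
            * Real.cosh ((θ₂ p - θ₁ p)/2)
          + Real.sinh ((θ₃ p - θ₀ p)/2)
            * (Real.sinh ((θ₂ p - θ₁ p)/2) * ((pdv θ₂ p - pdv θ₁ p)/2)))
        = (σ₂ + σ₁) * ((Real.cosh ((θ₂ p - θ₁ p)/2) * ((pdv θ₂ p - pdv θ₁ p)/2))
            * Real.cosh ((θ₃ p - θ₀ p)/2)
          + Real.sinh ((θ₂ p - θ₁ p)/2)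
            * (Real.sinh ((θ₃ p - θ₀ p)/2) * ((pdv θ₃ p - pdv θ₀ p)/2))) := by
      have h1 := hLv.deriv
      have h2 := hRv.deriv
      rw [heqv] at h1
      rw [h2] at h1
      exact h1.symm
    have hVp : ((σ₂-σ₁)*((Real.exp (θ₃ p/2))^2+(Real.exp (θ₀ p/2))^2)
            *((Real.exp (θ₂ p/2))^2+(Real.exp (θ₁ p/2))^2)
          - (σ₂+σ₁)*((Real.exp (θ₃ p/2))^2-(Real.exp (θ₀ p/2))^2)
            *((Real.exp (θ₂ p/2))^2-(Real.exp (θ₁ p/2))^2))*(pdv θ₃ p - pdv θ₀ p)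
        = ((σ₂+σ₁)*((Real.exp (θ₃ p/2))^2+(Real.exp (θ₀ p/2))^2)
            *((Real.exp (θ₂ p/2))^2+(Real.exp (θ₁ p/2))^2)
          - (σ₂-σ₁)*((Real.exp (θ₃ p/2))^2-(Real.exp (θ₀ p/2))^2)
            *((Real.exp (θ₂ p/2))^2-(Real.exp (θ₁ p/2))^2))*(pdv θ₂ p - pdv θ₁ p) := by
      rw [sinh_half_sub, cosh_half_sub, sinh_half_sub, cosh_half_sub] at hderv
      field_simp at hderv
      refine mul_left_cancel₀ (show (512*(Real.exp (θ₂ p/2)*Real.exp (θ₁ p/2)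
        *Real.exp (θ₃ p/2)*Real.exp (θ₀ p/2))^3 : ℝ) ≠ 0 by positivity) ?_
      linear_combination (512*(Real.exp (θ₂ p/2)*Real.exp (θ₁ p/2)
        *Real.exp (θ₃ p/2)*Real.exp (θ₀ p/2))^3) * hderv
    exact bianchi_core σ₁ σ₂ (Real.exp (θ₀ p/2)) (Real.exp (θ₁ p/2))
      (Real.exp (θ₂ p/2)) (Real.exp (θ₃ p/2))
      (pdu θ₀ p) (pdu θ₁ p) (pdu θ₂ p) (pdu θ₃ p)
      (pdv θ₀ p) (pdv θ₁ p) (pdv θ₂ p) (pdv θ₃ p)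
      hσ₁ hσ₂ hΔ ha hb he hd hA1 hB1 hA2 hB2 hPp
      (by linear_combination hUp) (by linear_combination hVp)
  constructor
  · intro p
    exact ⟨poly_backlundA σ₂ (pdu θ₁ p) (pdv θ₃ p) (θ₁ p) (θ₃ p) hσ₂ (main p).1,
      poly_backlundB σ₂ (pdv θ₁ p) (pdu θ₃ p) (θ₁ p) (θ₃ p) hσ₂ (main p).2.1⟩
  · intro p
    exact ⟨poly_backlundA σ₁ (pdu θ₂ p) (pdv θ₃ p) (θ₂ p) (θ₃ p) hσ₁ (main p).2.2.1,
      poly_backlundB σ₁ (pdv θ₂ p) (pdu θ₃ p) (θ₂ p) (θ₃ p) hσ₁ (main p).2.2.2⟩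
end

section
/- Let a₁, a₂ ∈ ℝ be nonzero with a₁⁻¹ − a₂⁻¹ = 1, and let α, β, λ, μ, ω : ℝ² → ℝ be twice continuously differentiable functions satisfying at every point of ℝ² the linear system: ∂α/∂u = λ·cos ω, ∂α/∂v = −μ·sin ω, ∂β/∂u = λ·sin ω, ∂β/∂v = μ·cos ω, ∂λ/∂u = −cos ω·(α/a₁) − sin ω·(β/a₂) − μ·∂ω/∂v, ∂λ/∂v = −μ·∂ω/∂u, ∂μ/∂u = λ·∂ω/∂v, ∂μ/∂v = sin ω·(α/a₁) − cos ω·(β/a₂) + λ·∂ω/∂u. Then at every point where μ ≠ 0, the function ω satisfies the hyperbolic sine-Gordon equation ∂²ω/∂v² − ∂²ω/∂u² = cos ω · sin ω. -/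
/-!
Write `∂ᵤ, ∂ᵥ` for the partial derivatives. Differentiating the equations for `∂ᵤλ` and `∂ᵥλ`
with respect to `v` and `u` and inserting the remaining equations of the system, the
integrability condition `∂ᵥ∂ᵤλ = ∂ᵤ∂ᵥλ` becomes
`μ (∂ᵥ²ω − ∂ᵤ²ω) = μ cos ω sin ω (a₁⁻¹ − a₂⁻¹)`, and `a₁⁻¹ − a₂⁻¹ = 1`.
-/

section PartialDerivatives

variable {f : ℝ × ℝ → ℝ} {f' : (ℝ × ℝ) →L[ℝ] ℝ} {u v : ℝ}

lemma pdu_eq_of_hasFDerivAt (h : HasFDerivAt f f' (u, v)) : pdu f (u, v) = f' (1, 0) :=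
  (h.comp_hasDerivAt u ((hasDerivAt_id u).prodMk (hasDerivAt_const u v))).deriv

lemma pdv_eq_of_hasFDerivAt (h : HasFDerivAt f f' (u, v)) : pdv f (u, v) = f' (0, 1) :=
  (h.comp_hasDerivAt v ((hasDerivAt_const v u).prodMk (hasDerivAt_id v))).deriv

lemma hasDerivAt_pdu_s14 (h : DifferentiableAt ℝ f (u, v)) :
    HasDerivAt (fun x => f (x, v)) (pdu f (u, v)) u :=
  (h.comp u (differentiableAt_id.prodMk (differentiableAt_const v))).hasDerivAt

lemma hasDerivAt_pdv_s14 (h : DifferentiableAt ℝ f (u, v)) :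
    HasDerivAt (fun y => f (u, y)) (pdv f (u, v)) v :=
  (h.comp v ((differentiableAt_const u).prodMk differentiableAt_id)).hasDerivAt

lemma pdu_eq_fderiv (h : Differentiable ℝ f) : pdu f = fun p => fderiv ℝ f p (1, 0) :=
  funext fun _ => pdu_eq_of_hasFDerivAt (h _).hasFDerivAt

lemma pdv_eq_fderiv (h : Differentiable ℝ f) : pdv f = fun p => fderiv ℝ f p (0, 1) :=
  funext fun _ => pdv_eq_of_hasFDerivAt (h _).hasFDerivAt

lemma contDiff_pdu {n : WithTop ℕ∞} (hf : ContDiff ℝ (n + 1) f) : ContDiff ℝ n (pdu f) := by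
  rw [pdu_eq_fderiv (hf.differentiable (by simp))]
  exact (hf.fderiv_right le_rfl).clm_apply contDiff_const

lemma contDiff_pdv {n : WithTop ℕ∞} (hf : ContDiff ℝ (n + 1) f) : ContDiff ℝ n (pdv f) := by
  rw [pdv_eq_fderiv (hf.differentiable (by simp))]
  exact (hf.fderiv_right le_rfl).clm_apply contDiff_const

lemma pdu_pdv_comm (hf : ContDiff ℝ 2 f) (p : ℝ × ℝ) : pdu (pdv f) p = pdv (pdu f) p := by
  have hf' : Differentiable ℝ (fderiv ℝ f) := (hf.fderiv_right le_rfl).differentiable one_ne_zero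
  have hsnd (w : ℝ × ℝ) :
      HasFDerivAt (fun q => fderiv ℝ f q w) ((fderiv ℝ (fderiv ℝ f) p).flip w) p := by
    simpa using (hf' p).hasFDerivAt.clm_apply (hasFDerivAt_const w p)
  rw [pdv_eq_fderiv (hf.differentiable two_ne_zero),
    pdu_eq_fderiv (hf.differentiable two_ne_zero),
    pdu_eq_of_hasFDerivAt (hsnd _), pdv_eq_of_hasFDerivAt (hsnd _)]
  exact hf.contDiffAt.isSymmSndFDerivAt (by simp) _ _

end PartialDerivatives

theorem linear_system_implies_hyperbolic_sineGordon_general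
    (a₁ a₂ : ℝ) (ha : a₁⁻¹ - a₂⁻¹ = 1)
    (al be lam mu om : ℝ × ℝ → ℝ)
    (hal : ContDiff ℝ 2 al) (hbe : ContDiff ℝ 2 be) (hlam : ContDiff ℝ 2 lam)
    (hmu : ContDiff ℝ 2 mu) (hom : ContDiff ℝ 2 om)
    (hav : ∀ p : ℝ × ℝ, pdv al p = -(mu p) * Real.sin (om p))
    (hbv : ∀ p : ℝ × ℝ, pdv be p = mu p * Real.cos (om p))
    (hlu : ∀ p : ℝ × ℝ, pdu lam p =
      -Real.cos (om p) * (al p / a₁) - Real.sin (om p) * (be p / a₂) - mu p * pdv om p)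
    (hlv : ∀ p : ℝ × ℝ, pdv lam p = -(mu p) * pdu om p)
    (hmuu : ∀ p : ℝ × ℝ, pdu mu p = lam p * pdv om p)
    (hmuv : ∀ p : ℝ × ℝ, pdv mu p =
      Real.sin (om p) * (al p / a₁) - Real.cos (om p) * (be p / a₂) + lam p * pdu om p) :
    ∀ p : ℝ × ℝ, mu p ≠ 0 →
      pdv (pdv om) p - pdu (pdu om) p = Real.cos (om p) * Real.sin (om p) := by
  rintro ⟨u, v⟩ hμ
  have hd {f : ℝ × ℝ → ℝ} (hf : ContDiff ℝ 2 f) : Differentiable ℝ f :=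
    hf.differentiable two_ne_zero
  have hpdu_pdv_lam : pdu (pdv lam) (u, v) =
      -pdu mu (u, v) * pdu om (u, v) + -mu (u, v) * pdu (pdu om) (u, v) := by
    rw [funext hlv]
    exact ((hasDerivAt_pdu_s14 (hd hmu _)).neg.mul
      (hasDerivAt_pdu_s14 ((contDiff_pdu (n := 1) hom).differentiable one_ne_zero _))).deriv
  have hpdv_pdu_lam : pdv (pdu lam) (u, v) =
      (-(-Real.sin (om (u, v)) * pdv om (u, v)) * (al (u, v) / a₁)
        + -Real.cos (om (u, v)) * (pdv al (u, v) / a₁))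
      - (Real.cos (om (u, v)) * pdv om (u, v) * (be (u, v) / a₂)
        + Real.sin (om (u, v)) * (pdv be (u, v) / a₂))
      - (pdv mu (u, v) * pdv om (u, v) + mu (u, v) * pdv (pdv om) (u, v)) := by
    rw [funext hlu]
    have hω := hasDerivAt_pdv_s14 (hd hom (u, v))
    exact (((hω.cos.neg.mul ((hasDerivAt_pdv_s14 (hd hal _)).div_const a₁)).sub
      (hω.sin.mul ((hasDerivAt_pdv_s14 (hd hbe _)).div_const a₂))).sub
      ((hasDerivAt_pdv_s14 (hd hmu _)).mul
        (hasDerivAt_pdv_s14 ((contDiff_pdv (n := 1) hom).differentiable one_ne_zero _)))).deriv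
  have hcompat := pdu_pdv_comm hlam (u, v)
  rw [hpdu_pdv_lam, hpdv_pdu_lam, hmuu, hav, hbv, hmuv] at hcompat
  refine mul_left_cancel₀ hμ ?_
  linear_combination hcompat + mu (u, v) * Real.cos (om (u, v)) * Real.sin (om (u, v)) * ha

/-- The hyperbolic sine-Gordon equation is the compatibility condition of the linear
system governing real deformations of the imaginary region of the real hyperbolic
paraboloid: if `α, β, λ, μ, ω` satisfy the linear system everywhere, then at every
point where `μ ≠ 0` one has `∂²ω/∂v² − ∂²ω/∂u² = cos ω · sin ω`. -/
theorem linear_system_implies_hyperbolic_sineGordon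
    (a₁ a₂ : ℝ) (ha₁ : a₁ ≠ 0) (ha₂ : a₂ ≠ 0) (ha : a₁⁻¹ - a₂⁻¹ = 1)
    (al be lam mu om : ℝ × ℝ → ℝ)
    (hal : ContDiff ℝ 2 al) (hbe : ContDiff ℝ 2 be) (hlam : ContDiff ℝ 2 lam)
    (hmu : ContDiff ℝ 2 mu) (hom : ContDiff ℝ 2 om)
    (hau : ∀ p : ℝ × ℝ, pdu al p = lam p * Real.cos (om p))
    (hav : ∀ p : ℝ × ℝ, pdv al p = -(mu p) * Real.sin (om p))
    (hbu : ∀ p : ℝ × ℝ, pdu be p = lam p * Real.sin (om p))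
    (hbv : ∀ p : ℝ × ℝ, pdv be p = mu p * Real.cos (om p))
    (hlu : ∀ p : ℝ × ℝ, pdu lam p =
      -Real.cos (om p) * (al p / a₁) - Real.sin (om p) * (be p / a₂) - mu p * pdv om p)
    (hlv : ∀ p : ℝ × ℝ, pdv lam p = -(mu p) * pdu om p)
    (hmuu : ∀ p : ℝ × ℝ, pdu mu p = lam p * pdv om p)
    (hmuv : ∀ p : ℝ × ℝ, pdv mu p =
      Real.sin (om p) * (al p / a₁) - Real.cos (om p) * (be p / a₂) + lam p * pdu om p) :
    ∀ p : ℝ × ℝ, mu p ≠ 0 →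
      pdv (pdv om) p - pdu (pdu om) p = Real.cos (om p) * Real.sin (om p) :=
  linear_system_implies_hyperbolic_sineGordon_general a₁ a₂ ha al be lam mu om hal hbe hlam hmu hom
    hav hbv hlu hlv hmuu hmuv
end
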